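/- Fix a bijection # : (finite binary sequences) → ℕ. Let p be a perfect subtree of 2^{<ω} and let f : p → (finite sequences in ℕ) be monotone and proper. Then there exist a map c ↦ t_c from finite binary sequences into the splitting nodes of p and a function h : ℕ → ℕ such that: t_c ⊊ t_{c⌢i} for i ∈ {0,1}; #(c) lies in the domain of f(t_c); and h(#(c)) = f(t_c)(#(c)) for all c. Consequently q = downward closure of {t_c : c ∈ 2^{<ω}} generates a perfect subtree of p such that every branch x of q satisfies: f*(x) agrees with h at infinitely many arguments. -/
import Mathlib

def bres (x : ℕ → Bool) (n : ℕ) : List Bool := List.ofFn fun i : Fin n => x i.1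

def PerfectTree (p : Set (List Bool)) : Prop :=
  p.Nonempty ∧ (∀ s ∈ p, ∀ t : List Bool, t <+: s → t ∈ p) ∧
    ∀ s ∈ p, ∃ t₁ ∈ p, ∃ t₂ ∈ p, s <+: t₁ ∧ s <+: t₂ ∧ ¬ t₁ <+: t₂ ∧ ¬ t₂ <+: t₁

def branches (p : Set (List Bool)) : Set (ℕ → Bool) := {x | ∀ n, bres x n ∈ p}

def SplitNode (p : Set (List Bool)) (t : List Bool) : Prop :=
  t ∈ p ∧ t ++ [false] ∈ p ∧ t ++ [true] ∈ p

/- ### helper lemmas -/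

lemma bres_length (x : ℕ → Bool) (n : ℕ) : (bres x n).length = n := by simp [bres]

lemma bres_take (x : ℕ → Bool) {m n : ℕ} (h : m ≤ n) : (bres x n).take m = bres x m := by
  apply List.ext_getElem <;> simp [bres, Nat.min_eq_left h]

lemma bres_prefix (x : ℕ → Bool) {m n : ℕ} (h : m ≤ n) : bres x m <+: bres x n := by
  rw [← bres_take x h]; exact List.take_prefix _ _

lemma prefix_bres {x : ℕ → Bool} {s : List Bool} {n : ℕ} (h : s <+: bres x n) :
    s = bres x s.length := by
  have hl : s.length ≤ n := by simpa [bres_length] using h.length_le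
  rw [← bres_take x hl]
  rw [List.prefix_iff_eq_take] at h
  exact h

lemma pre_eq {l₁ l₂ t : List Bool} (h1 : l₁ <+: t) (h2 : l₂ <+: t)
    (h : l₁.length = l₂.length) : l₁ = l₂ :=
  (List.prefix_of_prefix_length_le h1 h2 h.le).eq_of_length h

lemma exists_split_lists : ∀ (t₁ t₂ : List Bool), ¬ t₁ <+: t₂ → ¬ t₂ <+: t₁ →
    ∃ u b, u ++ [b] <+: t₁ ∧ u ++ [!b] <+: t₂
  | [], _, h1, _ => absurd (List.nil_prefix) h1
  | _ :: _, [], _, h2 => absurd (List.nil_prefix) h2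
  | a :: t₁, b :: t₂, h1, h2 => by
    by_cases hab : a = b
    · subst hab
      have h1' : ¬ t₁ <+: t₂ := fun h => h1 (by rw [List.cons_prefix_cons]; exact ⟨rfl, h⟩)
      have h2' : ¬ t₂ <+: t₁ := fun h => h2 (by rw [List.cons_prefix_cons]; exact ⟨rfl, h⟩)
      obtain ⟨u, c, hu1, hu2⟩ := exists_split_lists t₁ t₂ h1' h2'
      exact ⟨a :: u, c, by rw [List.cons_append, List.cons_prefix_cons]; exact ⟨rfl, hu1⟩,
        by rw [List.cons_append, List.cons_prefix_cons]; exact ⟨rfl, hu2⟩⟩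
    · refine ⟨[], a, by simp, ?_⟩
      have hb : b = !a := by cases a <;> cases b <;> simp_all
      simp [hb]

lemma cons_of_prefix_ne {c c' : List Bool} (h : c <+: c') (hne : c ≠ c') :
    ∃ j d, c' = c ++ j :: d := by
  obtain ⟨t, rfl⟩ := h
  cases t with
  | nil => simp at hne
  | cons j d => exact ⟨j, d, rfl⟩

/- ### the construction -/

open Classical in
noncomputable def pickNode (p : Set (List Bool)) (f : List Bool → List ℕ)
    (s : List Bool) (N : ℕ) : List Bool :=
  if h : ∃ u, SplitNode p u ∧ s <+: u ∧ N < (f u).length then h.choose else []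

noncomputable def TT (num : List Bool → ℕ) (p : Set (List Bool)) (f : List Bool → List ℕ) :
    List Bool → List Bool
  | [] => pickNode p f [] (num [])
  | i :: r => pickNode p f (TT num p f r ++ [i]) (num ((i :: r).reverse))

noncomputable def Tfun (num : List Bool → ℕ) (p : Set (List Bool)) (f : List Bool → List ℕ)
    (c : List Bool) : List Bool := TT num p f c.reverse

noncomputable def hfun (num : List Bool → ℕ) (hnum : Function.Bijective num)
    (p : Set (List Bool)) (f : List Bool → List ℕ) (n : ℕ) : ℕ :=
  ((f (Tfun num p f ((Equiv.ofBijective num hnum).symm n)))[n]?).getD 0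

open Classical in
noncomputable def extOne (p : Set (List Bool)) (s : List Bool) : List Bool :=
  if h : ∃ t ∈ p, s <+: t ∧ t.length = s.length + 1 then h.choose else s ++ [false]

theorem stmt18 (num : List Bool → ℕ) (hnum : Function.Bijective num)
    (p : Set (List Bool)) (hp : PerfectTree p)
    (f : List Bool → List ℕ)
    (hmono : ∀ s ∈ p, ∀ t ∈ p, s <+: t → f s <+: f t)
    (hproper : ∀ x ∈ branches p,
      Filter.Tendsto (fun n => (f (bres x n)).length) Filter.atTop Filter.atTop) :
    ∃ (T : List Bool → List Bool) (h : ℕ → ℕ),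
      (∀ c : List Bool, SplitNode p (T c)) ∧
      (∀ (c : List Bool) (i : Bool), T c <+: T (c ++ [i]) ∧ T c ≠ T (c ++ [i])) ∧
      (∀ c : List Bool, num c < (f (T c)).length) ∧
      (∀ c : List Bool, (f (T c))[num c]? = some (h (num c))) ∧
      {s | ∃ c : List Bool, s <+: T c} ⊆ p ∧
      PerfectTree {s | ∃ c : List Bool, s <+: T c} ∧
      ∀ F : (ℕ → Bool) → (ℕ → ℕ),
        (∀ x ∈ branches p, ∀ (n i : ℕ) (hi : i < (f (bres x n)).length),
          (f (bres x n))[i]'hi = F x i) →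
        ∀ x ∈ branches {s | ∃ c : List Bool, s <+: T c},
          {m : ℕ | F x m = h m}.Infinite := by
  obtain ⟨hne, hdc, hsplit⟩ := hp
  have hnil : [] ∈ p := by
    obtain ⟨s, hs⟩ := hne
    exact hdc s hs [] (List.nil_prefix)
  -- every node of p has a one-step extension in p
  have hext1 : ∀ s ∈ p, ∃ t ∈ p, s <+: t ∧ t.length = s.length + 1 := by
    intro s hs
    obtain ⟨t₁, ht₁, t₂, ht₂, hst₁, hst₂, h12, h21⟩ := hsplit s hs
    have hlt : s.length < t₁.length ∨ s.length < t₂.length := by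
      by_contra hcon
      push_neg at hcon
      have e1 : t₁ = s := (pre_eq hst₁ (List.prefix_refl _) (le_antisymm hst₁.length_le hcon.1)).symm
      have e2 : t₂ = s := (pre_eq hst₂ (List.prefix_refl _) (le_antisymm hst₂.length_le hcon.2)).symm
      exact h12 (by rw [e1, e2])
    rcases hlt with hlt | hlt
    · refine ⟨t₁.take (s.length + 1), hdc t₁ ht₁ _ (List.take_prefix _ _), ?_, ?_⟩
      · rw [List.prefix_iff_eq_take] at hst₁ ⊢
        rw [List.take_take, Nat.min_eq_left (by simp [Nat.min_eq_left hlt])]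
        · exact hst₁
      · simp [Nat.min_eq_left hlt]
    · refine ⟨t₂.take (s.length + 1), hdc t₂ ht₂ _ (List.take_prefix _ _), ?_, ?_⟩
      · rw [List.prefix_iff_eq_take] at hst₂ ⊢
        rw [List.take_take, Nat.min_eq_left (by simp [Nat.min_eq_left hlt])]
        · exact hst₂
      · simp [Nat.min_eq_left hlt]
  have hextOne : ∀ s ∈ p, extOne p s ∈ p ∧ s <+: extOne p s ∧
      (extOne p s).length = s.length + 1 := by
    intro s hs
    rw [extOne, dif_pos (hext1 s hs)]
    obtain ⟨h1, h2, h3⟩ := (hext1 s hs).choose_spec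
    exact ⟨h1, h2, h3⟩
  have hch : ∀ s ∈ p, ∀ n, (extOne p)^[n] s ∈ p ∧ ((extOne p)^[n] s).length = s.length + n ∧
      s <+: (extOne p)^[n] s := by
    intro s hs n
    induction n with
    | zero => exact ⟨by simpa using hs, by simp, by simp⟩
    | succ n ih =>
      rw [Function.iterate_succ_apply']
      obtain ⟨h1, h2, h3⟩ := ih
      obtain ⟨h4, h5, h6⟩ := hextOne _ h1
      exact ⟨h4, by omega, h3.trans h5⟩
  have hchain : ∀ s ∈ p, ∀ m n, m ≤ n → (extOne p)^[m] s <+: (extOne p)^[n] s := by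
    intro s hs m n hmn
    obtain ⟨k, rfl⟩ := Nat.exists_eq_add_of_le hmn
    rw [Nat.add_comm, Function.iterate_add_apply]
    exact (hch _ ((hch s hs m).1) k).2.2
  -- Lemma B : extensions with long f-value
  have hB : ∀ s ∈ p, ∀ N : ℕ, ∃ t ∈ p, s <+: t ∧ N < (f t).length := by
    intro s hs N
    set g := fun n => (extOne p)^[n] s with hg
    have hglen : ∀ n, (g n).length = s.length + n := fun n => (hch s hs n).2.1
    set x : ℕ → Bool := fun k => (g (k + 1)).getD k false with hx
    have hagree : ∀ n k (hk : k < (g n).length), (g n)[k] = x k := by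
      intro n k hk
      show _ = (g (k + 1)).getD k false
      rcases le_total n (k + 1) with hle | hle
      · have hpre := hchain s hs n (k + 1) hle
        rw [hpre.getElem hk, List.getD_eq_getElem]
      · have hk' : k < (g (k + 1)).length := by rw [hglen]; omega
        rw [List.getD_eq_getElem _ _ hk']
        exact ((hchain s hs (k + 1) n hle).getElem hk').symm
    have hbres : ∀ n, bres x n = (g n).take n := by
      intro n
      apply List.ext_getElem
      · rw [bres_length, List.length_take, hglen]; omega
      · intro k hk1 hk2
        rw [List.getElem_take]
        have hk3 : k < n := by simpa [bres_length] using hk1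
        have hk4 : k < (g n).length := by rw [hglen]; omega
        have : (bres x n)[k]'hk1 = x k := by simp [bres]
        rw [this]
        exact (hagree n k hk4).symm
    have hxp : x ∈ branches p := by
      intro n
      show bres x n ∈ p
      rw [hbres n]
      exact hdc _ (hch s hs n).1 _ (List.take_prefix _ _)
    have hsx : ∀ n, s.length ≤ n → s <+: bres x n := by
      intro n hn
      refine List.prefix_of_prefix_length_le (hch s hs n).2.2 ?_ ?_
      · rw [hbres n]; exact List.take_prefix _ _
      · rw [bres_length]; exact hn
    obtain ⟨n, hN, hn⟩ :=
      (((hproper x hxp).eventually_gt_atTop N).and (Filter.eventually_ge_atTop s.length)).exists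
    exact ⟨bres x n, hxp n, hsx n hn, hN⟩
  -- Lemma A : extensions to splitting nodes
  have hA : ∀ s ∈ p, ∃ u, s <+: u ∧ SplitNode p u := by
    intro s hs
    obtain ⟨t₁, ht₁, t₂, ht₂, hst₁, hst₂, h12, h21⟩ := hsplit s hs
    obtain ⟨u, b, hu1, hu2⟩ := exists_split_lists t₁ t₂ h12 h21
    have hsu : s <+: u := by
      rcases le_or_gt s.length u.length with hl | hl
      · exact List.prefix_of_prefix_length_le hst₁ ((List.prefix_append u [b]).trans hu1) hl
      · have hb1 : u ++ [b] <+: s :=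
          List.prefix_of_prefix_length_le hu1 hst₁ (by simp; omega)
        have hb2 : u ++ [!b] <+: s :=
          List.prefix_of_prefix_length_le hu2 hst₂ (by simp; omega)
        have := pre_eq hb1 hb2 (by simp)
        simp at this
    have hup : u ∈ p := hdc t₁ ht₁ u ((List.prefix_append u [b]).trans hu1)
    have hbp : u ++ [b] ∈ p := hdc t₁ ht₁ _ hu1
    have hnbp : u ++ [!b] ∈ p := hdc t₂ ht₂ _ hu2
    refine ⟨u, hsu, hup, ?_, ?_⟩ <;> cases b <;> simp_all
  -- key existence statement
  have key : ∀ s ∈ p, ∀ N, ∃ u, SplitNode p u ∧ s <+: u ∧ N < (f u).length := by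
    intro s hs N
    obtain ⟨t, htp, hst, hlen⟩ := hB s hs N
    obtain ⟨u, htu, husplit⟩ := hA t htp
    exact ⟨u, husplit, hst.trans htu,
      hlen.trans_le (hmono t htp u husplit.1 htu).length_le⟩
  have hpick : ∀ s ∈ p, ∀ N, SplitNode p (pickNode p f s N) ∧ s <+: pickNode p f s N ∧
      N < (f (pickNode p f s N)).length := by
    intro s hs N
    rw [pickNode, dif_pos (key s hs N)]
    exact (key s hs N).choose_spec
  -- invariants of TT
  have hTT : ∀ r, SplitNode p (TT num p f r) ∧ num r.reverse < (f (TT num p f r)).length := by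
    intro r
    induction r with
    | nil =>
      obtain ⟨h1, _, h3⟩ := hpick [] hnil (num [])
      exact ⟨h1, by simpa [TT] using h3⟩
    | cons i r ih =>
      have hmem : TT num p f r ++ [i] ∈ p := by
        cases i
        · exact ih.1.2.1
        · exact ih.1.2.2
      obtain ⟨h1, _, h3⟩ := hpick _ hmem (num ((i :: r).reverse))
      exact ⟨by simpa [TT] using h1, by simpa [TT] using h3⟩
  have hTTstep : ∀ i r, TT num p f r ++ [i] <+: TT num p f (i :: r) := by
    intro i r
    have hmem : TT num p f r ++ [i] ∈ p := by
      cases i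
      · exact (hTT r).1.2.1
      · exact (hTT r).1.2.2
    simpa [TT] using (hpick _ hmem (num ((i :: r).reverse))).2.1
  set T : List Bool → List Bool := Tfun num p f with hTdef
  have hstep : ∀ c i, T c ++ [i] <+: T (c ++ [i]) := by
    intro c i
    have := hTTstep i c.reverse
    simpa [hTdef, Tfun, List.reverse_append] using this
  have hTsplit : ∀ c, SplitNode p (T c) := fun c => (hTT c.reverse).1
  have hTlen : ∀ c, num c < (f (T c)).length := fun c => by
    simpa [hTdef, Tfun] using (hTT c.reverse).2
  have hTmono : ∀ c d, T c <+: T (c ++ d) := by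
    intro c d
    induction d using List.reverseRecOn with
    | nil => simp
    | append_singleton d j ih =>
      rw [← List.append_assoc]
      exact ih.trans ((List.prefix_append _ [j]).trans (hstep (c ++ d) j))
  have hTmono' : ∀ c c', c <+: c' → T c <+: T c' := by
    rintro c c' ⟨d, rfl⟩
    exact hTmono c d
  have hTlt : ∀ c c', c <+: c' → c ≠ c' → (T c).length < (T c').length := by
    intro c c' hcc hne
    obtain ⟨j, d, rfl⟩ := cons_of_prefix_ne hcc hne
    have h1 : T c ++ [j] <+: T (c ++ [j]) := hstep c j
    have h2 : T (c ++ [j]) <+: T (c ++ j :: d) := by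
      have := hTmono (c ++ [j]) d
      rwa [List.append_assoc] at this
    have := (h1.trans h2).length_le
    simp at this
    omega
  have hTcomp : ∀ c c', T c <+: T c' → c <+: c' := by
    intro c c' hTp
    by_contra hcc
    by_cases h21 : c' <+: c
    · have hne : c' ≠ c := by rintro rfl; exact hcc (List.prefix_refl _)
      have hl1 := hTlt c' c h21 hne
      have hl2 := hTp.length_le
      omega
    · obtain ⟨u, b, hu1, hu2⟩ := exists_split_lists c c' hcc h21
      have h1 : T u ++ [b] <+: T c := (hstep u b).trans (hTmono' _ _ hu1)
      have h2 : T u ++ [!b] <+: T c' := (hstep u (!b)).trans (hTmono' _ _ hu2)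
      have := pre_eq (h1.trans hTp) h2 (by simp)
      simp at this
  have hqsub : {s | ∃ c : List Bool, s <+: T c} ⊆ p := by
    rintro s ⟨c, hc⟩
    exact hdc (T c) (hTsplit c).1 s hc
  refine ⟨T, hfun num hnum p f, hTsplit, ?_, hTlen, ?_, hqsub, ?_, ?_⟩
  · -- strict extension
    intro c i
    refine ⟨(List.prefix_append _ _).trans (hstep c i), ?_⟩
    intro heq
    have := hTlt c (c ++ [i]) (List.prefix_append _ _) (by simp)
    rw [← heq] at this
    omega
  · -- value clause
    intro c
    have hc : (Equiv.ofBijective num hnum).symm (num c) = c :=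
      (Equiv.ofBijective num hnum).symm_apply_apply c
    rw [List.getElem?_eq_getElem (hTlen c)]
    congr 1
    rw [hfun, hc]
    rw [← hTdef, List.getElem?_eq_getElem (hTlen c)]
    rfl
  · -- perfectness of q
    refine ⟨⟨[], [], List.nil_prefix⟩, ?_, ?_⟩
    · rintro s ⟨c, hc⟩ t ht
      exact ⟨c, ht.trans hc⟩
    · rintro s ⟨c, hc⟩
      refine ⟨T (c ++ [false]), ⟨_, List.prefix_refl _⟩, T (c ++ [true]), ⟨_, List.prefix_refl _⟩,
        hc.trans (hTmono c [false]), hc.trans (hTmono c [true]), ?_, ?_⟩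
      · intro hcon
        have := pre_eq ((hstep c false).trans hcon) (hstep c true) (by simp)
        simp at this
      · intro hcon
        have := pre_eq ((hstep c true).trans hcon) (hstep c false) (by simp)
        simp at this
  · -- branches clause
    intro F hF x hx
    have hxp : x ∈ branches p := fun n => hqsub (hx n)
    have hgrow : ∀ c, bres x (T c).length = T c →
        ∃ c', bres x (T c').length = T c' ∧ c.length < c'.length := by
      intro c hcx
      set n := max (T (c ++ [false])).length (T (c ++ [true])).length + 1 with hn
      obtain ⟨c₁, hc₁⟩ := hx n
      have hf0 := hTlt c (c ++ [false]) (List.prefix_append _ _) (by simp)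
      have hf1 := hTlt c (c ++ [true]) (List.prefix_append _ _) (by simp)
      have hlc : (T c).length < n := by omega
      have hTcn : T c <+: T c₁ := by
        have h1 : T c <+: bres x n := by
          conv_lhs => rw [← hcx]
          exact bres_prefix x hlc.le
        exact h1.trans hc₁
      have hcc₁ : c <+: c₁ := hTcomp _ _ hTcn
      have hne : c ≠ c₁ := by
        rintro rfl
        have := hc₁.length_le
        rw [bres_length] at this
        omega
      obtain ⟨j, d, rfl⟩ := cons_of_prefix_ne hcc₁ hne
      refine ⟨c ++ [j], ?_, by simp⟩
      have h1 : T (c ++ [j]) <+: T (c ++ j :: d) := by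
        have := hTmono (c ++ [j]) d
        rwa [List.append_assoc] at this
      have h2 : (T (c ++ [j])).length < n := by cases j <;> omega
      have h3 : T (c ++ [j]) <+: bres x n :=
        List.prefix_of_prefix_length_le h1 hc₁ (by rw [bres_length]; omega)
      exact (prefix_bres h3).symm
    have hbase : ∃ c, bres x (T c).length = T c := by
      obtain ⟨c₁, hc₁⟩ := hx ((T []).length + 1)
      have h1 : T [] <+: T c₁ := hTmono' [] c₁ (List.nil_prefix)
      have h3 : T [] <+: bres x ((T []).length + 1) :=
        List.prefix_of_prefix_length_le h1 hc₁ (by rw [bres_length]; omega)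
      exact ⟨[], (prefix_bres h3).symm⟩
    have hlong : ∀ k : ℕ, ∃ c, bres x (T c).length = T c ∧ k ≤ c.length := by
      intro k
      induction k with
      | zero =>
        obtain ⟨c, hc⟩ := hbase
        exact ⟨c, hc, Nat.zero_le _⟩
      | succ k ih =>
        obtain ⟨c, hc, hk⟩ := ih
        obtain ⟨c', hc', hlt⟩ := hgrow c hc
        exact ⟨c', hc', by omega⟩
    have hmem : ∀ c, bres x (T c).length = T c → F x (num c) = hfun num hnum p f (num c) := by
      intro c hc
      have h1 := hF x hxp (T c).length (num c) (by rw [hc]; exact hTlen c)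
      have h2 : hfun num hnum p f (num c) = (f (T c))[num c]'(hTlen c) := by
        have hc' : (Equiv.ofBijective num hnum).symm (num c) = c :=
          (Equiv.ofBijective num hnum).symm_apply_apply c
        rw [hfun, hc', ← hTdef, List.getElem?_eq_getElem (hTlen c)]
        rfl
      rw [h2, ← h1]
      congr 1
      rw [hc]
    have hS : {c : List Bool | bres x (T c).length = T c}.Infinite := by
      by_contra hfin
      rw [Set.not_infinite] at hfin
      obtain ⟨k, hk⟩ := (hfin.image (f := List.length)).bddAbove
      obtain ⟨c, hc, hkc⟩ := hlong (k + 1)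
      have : c.length ≤ k := hk ⟨c, hc, rfl⟩
      omega
    have himg : (num '' {c : List Bool | bres x (T c).length = T c}).Infinite :=
      hS.image (Set.injOn_of_injective hnum.1)
    refine himg.mono ?_
    rintro m ⟨c, hc, rfl⟩
    exact hmem c hc
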